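/- Let U and V be D×D unimodular matrices, let Λ₁, …, Λ_L be D×D nonsingular diagonal integer matrices, and set moduli M_i = UΛ_iV for 1 ≤ i ≤ L. Let Λ be the diagonal integer matrix whose j-th diagonal entry is the least common multiple of Λ₁(j,j), …, Λ_L(j,j), and let R = UΛB for any unimodular matrix B, which is an lcrm of the M_i. Then every integer vector m ∈ 𝒩(R) is uniquely determined by its remainders r_i = ⟨m⟩_{M_i}, 1 ≤ i ≤ L. -/

import Mathlib

open Matrix

/-- An integer matrix is unimodular if its determinant is `1` or `-1`. -/
def Unimod {D : ℕ} (U : Matrix (Fin D) (Fin D) ℤ) : Prop := U.det = 1 ∨ U.det = -1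

/-- `C` is a common right multiple (crm) of the family `M`. -/
def IsCRM {D n : ℕ} (M : Fin n → Matrix (Fin D) (Fin D) ℤ)
    (C : Matrix (Fin D) (Fin D) ℤ) : Prop :=
  C.det ≠ 0 ∧ ∀ i, ∃ Q : Matrix (Fin D) (Fin D) ℤ, C = M i * Q

/-- `C` is a least common right multiple (lcrm) of the family `M`. -/
def IsLCRM {D n : ℕ} (M : Fin n → Matrix (Fin D) (Fin D) ℤ)
    (C : Matrix (Fin D) (Fin D) ℤ) : Prop :=
  IsCRM M C ∧ ∀ C', IsCRM M C' → ∃ P : Matrix (Fin D) (Fin D) ℤ, C' = C * P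

/-- `C` is a common left multiple (clm) of the family `M`. -/
def IsCLM {D n : ℕ} (M : Fin n → Matrix (Fin D) (Fin D) ℤ)
    (C : Matrix (Fin D) (Fin D) ℤ) : Prop :=
  C.det ≠ 0 ∧ ∀ i, ∃ Q : Matrix (Fin D) (Fin D) ℤ, C = Q * M i

/-- `C` is a least common left multiple (lclm) of the family `M`. -/
def IsLCLM {D n : ℕ} (M : Fin n → Matrix (Fin D) (Fin D) ℤ)
    (C : Matrix (Fin D) (Fin D) ℤ) : Prop :=
  IsCLM M C ∧ ∀ C', IsCLM M C' → ∃ P : Matrix (Fin D) (Fin D) ℤ, C' = P * C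

/-- `B` is a common left divisor (cld) of the family `M`. -/
def IsCLD {D n : ℕ} (M : Fin n → Matrix (Fin D) (Fin D) ℤ)
    (B : Matrix (Fin D) (Fin D) ℤ) : Prop :=
  B.det ≠ 0 ∧ ∀ i, ∃ K : Matrix (Fin D) (Fin D) ℤ, M i = B * K

/-- `B` is a greatest common left divisor (gcld) of the family `M`:
`B` is a cld, and every cld of the family is a left divisor of `B`. -/
def IsGCLD {D n : ℕ} (M : Fin n → Matrix (Fin D) (Fin D) ℤ)
    (B : Matrix (Fin D) (Fin D) ℤ) : Prop :=
  IsCLD M B ∧ ∀ B', IsCLD M B' → ∃ K : Matrix (Fin D) (Fin D) ℤ, B = B' * K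

/-- `A` and `B` are left coprime: every (nonsingular) common left divisor is unimodular. -/
def LeftCoprime {D : ℕ} (A B : Matrix (Fin D) (Fin D) ℤ) : Prop :=
  ∀ C : Matrix (Fin D) (Fin D) ℤ, C.det ≠ 0 →
    (∃ K, A = C * K) → (∃ K, B = C * K) → Unimod C

/-- `A` and `B` are right coprime: every (nonsingular) common right divisor is unimodular. -/
def RightCoprime {D : ℕ} (A B : Matrix (Fin D) (Fin D) ℤ) : Prop :=
  ∀ C : Matrix (Fin D) (Fin D) ℤ, C.det ≠ 0 →
    (∃ K, A = K * C) → (∃ K, B = K * C) → Unimod C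

/-- `A` and `B` are coprime (for commuting matrices left and right coprimeness coincide). -/
def MatCoprime {D : ℕ} (A B : Matrix (Fin D) (Fin D) ℤ) : Prop :=
  LeftCoprime A B ∧ RightCoprime A B

/-- The lattice generated by an integer matrix `M`: all integer combinations `M n`. -/
def LAT {D : ℕ} (M : Matrix (Fin D) (Fin D) ℤ) : Set (Fin D → ℤ) :=
  {v | ∃ n : Fin D → ℤ, v = M.mulVec n}

/-- `𝒩(M)`: the integer vectors of the form `M x` with `x ∈ [0,1)^D`. -/
def NSet {D : ℕ} (M : Matrix (Fin D) (Fin D) ℤ) : Set (Fin D → ℤ) :=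
  {k | ∃ x : Fin D → ℚ, (∀ j, 0 ≤ x j ∧ x j < 1) ∧
      (M.map (Int.cast : ℤ → ℚ)).mulVec x = fun j => (k j : ℚ)}

/-- `r` is the remainder of `m` modulo `M`: `r ∈ 𝒩(M)` and `m − r ∈ LAT(M)`. -/
def IsRem {D : ℕ} (M : Matrix (Fin D) (Fin D) ℤ) (m r : Fin D → ℤ) : Prop :=
  r ∈ NSet M ∧ (m - r) ∈ LAT M

/-- The Euclidean norm on `ℝ^D`. -/
noncomputable def euclNorm {D : ℕ} (v : Fin D → ℝ) : ℝ := Real.sqrt (∑ j, (v j) ^ 2)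

/-- The lattice generated by a real matrix `M`: all integer combinations `M n`. -/
def LATR {D : ℕ} (M : Matrix (Fin D) (Fin D) ℝ) : Set (Fin D → ℝ) :=
  {v | ∃ n : Fin D → ℤ, v = M.mulVec (fun j => (n j : ℝ))}

/-! Right divisibility of integer matrices is reverse inclusion of their lattices, and since
`U`, `V`, `B` are unimodular, `LAT (U Λᵢ V) = U · LAT Λᵢ` and `LAT R = U · LAT Λ`. A diagonal
lattice is cut out by divisibility of the coordinates, so `LAT R = ⋂ᵢ LAT (U Λᵢ V)`: this gives the
lcrm property at once. Two vectors with the same remainders differ by an element of every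
`LAT (U Λᵢ V)`, hence of `LAT R`, and distinct points of `𝒩(R)` are never congruent modulo `R`. -/

lemma Unimod.isUnit_det {D : ℕ} {U : Matrix (Fin D) (Fin D) ℤ} (hU : Unimod U) :
    IsUnit U.det :=
  Int.isUnit_iff.mpr hU

lemma LAT_eq_range {D : ℕ} (M : Matrix (Fin D) (Fin D) ℤ) : LAT M = Set.range M.mulVec := by
  ext v
  exact ⟨fun ⟨n, hn⟩ => ⟨n, hn.symm⟩, fun ⟨n, hn⟩ => ⟨n, hn.symm⟩⟩

lemma exists_eq_mul_iff_LAT_subset {D : ℕ} {M N : Matrix (Fin D) (Fin D) ℤ} :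
    (∃ Q, N = M * Q) ↔ LAT N ⊆ LAT M := by
  simp only [LAT_eq_range]
  constructor
  · rintro ⟨Q, rfl⟩ _ ⟨n, rfl⟩
    exact ⟨Q *ᵥ n, mulVec_mulVec n M Q⟩
  · intro h
    choose n hn using fun k => h ⟨Pi.single k 1, rfl⟩
    refine ⟨Matrix.of fun j k => n k j, ext_col fun k => ?_⟩
    rw [← mulVec_single_one N, ← hn, ← mulVec_single_one (M * _), ← mulVec_mulVec,
      mulVec_single_one]
    rfl

lemma isLCRM_of_LAT_eq_iInter {D L : ℕ} {M : Fin L → Matrix (Fin D) (Fin D) ℤ}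
    {R : Matrix (Fin D) (Fin D) ℤ} (hR : R.det ≠ 0) (hlat : LAT R = ⋂ i, LAT (M i)) :
    IsLCRM M R := by
  simp only [IsLCRM, IsCRM, exists_eq_mul_iff_LAT_subset, hlat]
  exact ⟨⟨hR, Set.iInter_subset _⟩, fun C' hC' => Set.subset_iInter hC'.2⟩

lemma LAT_mul_of_unimod {D : ℕ} (M : Matrix (Fin D) (Fin D) ℤ) {V : Matrix (Fin D) (Fin D) ℤ}
    (hV : Unimod V) : LAT (M * V) = LAT M := by
  refine Set.Subset.antisymm (exists_eq_mul_iff_LAT_subset.mp ⟨V, rfl⟩)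
    (exists_eq_mul_iff_LAT_subset.mp ⟨V⁻¹, ?_⟩)
  rw [Matrix.mul_assoc, mul_nonsing_inv V hV.isUnit_det, Matrix.mul_one]

lemma mem_LAT_unimod_mul_iff {D : ℕ} {U : Matrix (Fin D) (Fin D) ℤ} (hU : Unimod U)
    (M : Matrix (Fin D) (Fin D) ℤ) (v : Fin D → ℤ) :
    v ∈ LAT (U * M) ↔ U⁻¹ *ᵥ v ∈ LAT M := by
  have hUinv : U⁻¹ * U = 1 := nonsing_inv_mul U hU.isUnit_det
  have hinvU : U * U⁻¹ = 1 := mul_nonsing_inv U hU.isUnit_det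
  constructor
  · rintro ⟨n, rfl⟩
    exact ⟨n, by rw [mulVec_mulVec, ← Matrix.mul_assoc, hUinv, Matrix.one_mul]⟩
  · rintro ⟨n, hn⟩
    exact ⟨n, by rw [← mulVec_mulVec, ← hn, mulVec_mulVec, hinvU, one_mulVec]⟩

lemma mem_LAT_diagonal_iff {D : ℕ} (d : Fin D → ℤ) (v : Fin D → ℤ) :
    v ∈ LAT (diagonal d) ↔ ∀ j, d j ∣ v j := by
  constructor
  · rintro ⟨n, rfl⟩ j
    rw [mulVec_diagonal]
    exact dvd_mul_right _ _
  · intro h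
    choose n hn using h
    exact ⟨n, funext fun j => by rw [mulVec_diagonal, ← hn]⟩

lemma LAT_diagonal_lcm {D : ℕ} {ι : Type*} [Fintype ι] (d : ι → Fin D → ℤ) :
    LAT (diagonal fun j => Finset.univ.lcm fun i => d i j) = ⋂ i, LAT (diagonal (d i)) := by
  ext v
  simp only [Set.mem_iInter, mem_LAT_diagonal_iff, Finset.lcm_dvd_iff, Finset.mem_univ,
    true_implies]
  exact forall_comm

lemma sub_mem_LAT_of_isRem {D : ℕ} {M : Matrix (Fin D) (Fin D) ℤ} {m m' r : Fin D → ℤ}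
    (h : IsRem M m r) (h' : IsRem M m' r) : m - m' ∈ LAT M := by
  obtain ⟨n, hn⟩ := h.2
  obtain ⟨n', hn'⟩ := h'.2
  refine ⟨n - n', ?_⟩
  rw [mulVec_sub, ← hn, ← hn']
  abel

/-- Two points of `𝒩(R)` that are congruent modulo `R` coincide: their preimages under `R` lie
in `[0,1)^D` and differ by an integer vector. -/
lemma eq_of_mem_NSet_of_sub_mem_LAT {D : ℕ} {R : Matrix (Fin D) (Fin D) ℤ} (hR : R.det ≠ 0)
    {m m' : Fin D → ℤ} (hm : m ∈ NSet R) (hm' : m' ∈ NSet R) (h : m - m' ∈ LAT R) :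
    m = m' := by
  obtain ⟨x, hx01, hx⟩ := hm
  obtain ⟨x', hx'01, hx'⟩ := hm'
  obtain ⟨n, hn⟩ := h
  set Rq := R.map (Int.cast : ℤ → ℚ)
  have hRq : IsUnit Rq := by
    rw [isUnit_iff_isUnit_det,
      show Rq.det = (R.det : ℚ) from ((Int.castRingHom ℚ).map_det R).symm]
    exact isUnit_iff_ne_zero.mpr (by exact_mod_cast hR)
  have hnx : (fun j => (n j : ℚ)) = x - x' := by
    refine mulVec_injective_iff_isUnit.mpr hRq ?_
    funext j
    have hj := congrArg (fun v : Fin D → ℤ => (v j : ℚ)) hn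
    simp only [Pi.sub_apply, Int.cast_sub] at hj
    rw [mulVec_sub, hx, hx', Pi.sub_apply, hj]
    exact (RingHom.map_mulVec (Int.castRingHom ℚ) R n j).symm
  have hn0 : n = 0 := funext fun j => by
    have hj : (n j : ℚ) = x j - x' j := congrFun hnx j
    have hlt : (n j : ℚ) < 1 := by linarith [(hx01 j).2, (hx'01 j).1]
    have hgt : (-1 : ℚ) < n j := by linarith [(hx01 j).1, (hx'01 j).2]
    have : n j < 1 ∧ -1 < n j := ⟨by exact_mod_cast hlt, by exact_mod_cast hgt⟩
    simp only [Pi.zero_apply]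
    omega
  rw [hn0, mulVec_zero] at hn
  exact sub_eq_zero.mp hn

theorem stmt12_general {D L : ℕ}
    (U V : Matrix (Fin D) (Fin D) ℤ) (hU : Unimod U) (hV : Unimod V)
    (d : Fin L → Fin D → ℤ) (hd : ∀ i j, d i j ≠ 0)
    (B : Matrix (Fin D) (Fin D) ℤ) (hB : Unimod B)
    (R : Matrix (Fin D) (Fin D) ℤ)
    (hR : R = U * Matrix.diagonal (fun j => Finset.univ.lcm (fun i => d i j)) * B) :
    IsLCRM (fun i => U * Matrix.diagonal (d i) * V) R ∧
      ∀ (m m' : Fin D → ℤ) (r : Fin L → Fin D → ℤ),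
        m ∈ NSet R → m' ∈ NSet R →
        (∀ i, IsRem (U * Matrix.diagonal (d i) * V) m (r i)) →
        (∀ i, IsRem (U * Matrix.diagonal (d i) * V) m' (r i)) → m = m' := by
  have hlat : LAT R = ⋂ i, LAT (U * diagonal (d i) * V) := by
    ext v
    simp only [hR, Set.mem_iInter, LAT_mul_of_unimod _ hB, LAT_mul_of_unimod _ hV,
      mem_LAT_unimod_mul_iff hU, LAT_diagonal_lcm]
  have hdet : R.det ≠ 0 := by
    rw [hR, det_mul, det_mul, det_diagonal]
    refine mul_ne_zero (mul_ne_zero hU.isUnit_det.ne_zero ?_) hB.isUnit_det.ne_zero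
    exact Finset.prod_ne_zero_iff.mpr fun j _ =>
      (Finset.lcm_eq_zero_iff.not.mpr fun ⟨i, _, hi⟩ => hd i j hi)
  refine ⟨isLCRM_of_LAT_eq_iInter hdet hlat, fun m m' r hm hm' hr hr' => ?_⟩
  refine eq_of_mem_NSet_of_sub_mem_LAT hdet hm hm' ?_
  rw [hlat]
  exact Set.mem_iInter.mpr fun i => sub_mem_LAT_of_isRem (hr i) (hr' i)

/-- moduli `Mᵢ = UΛᵢV`; `R = UΛB` (Λ the diagonal of columnwise lcm's)
is an lcrm of the moduli, and every `m ∈ 𝒩(R)` is uniquely determined by its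
remainders. -/
theorem stmt12 {D L : ℕ} (hL : 1 ≤ L)
    (U V : Matrix (Fin D) (Fin D) ℤ) (hU : Unimod U) (hV : Unimod V)
    (d : Fin L → Fin D → ℤ) (hd : ∀ i j, d i j ≠ 0)
    (B : Matrix (Fin D) (Fin D) ℤ) (hB : Unimod B)
    (R : Matrix (Fin D) (Fin D) ℤ)
    (hR : R = U * Matrix.diagonal (fun j => Finset.univ.lcm (fun i => d i j)) * B) :
    IsLCRM (fun i => U * Matrix.diagonal (d i) * V) R ∧
      ∀ (m m' : Fin D → ℤ) (r : Fin L → Fin D → ℤ),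
        m ∈ NSet R → m' ∈ NSet R →
        (∀ i, IsRem (U * Matrix.diagonal (d i) * V) m (r i)) →
        (∀ i, IsRem (U * Matrix.diagonal (d i) * V) m' (r i)) → m = m' :=
  stmt12_general U V hU hV d hd B hB R hR
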